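/- For every constant κ > 0, there exists a joint distribution of four random variables (A, B, C, D) on finite sets such that I(C:D) > I(C:D|A) + I(C:D|B) + I(A:B) + κ·(I(A:B|C) + I(B:D|C)). -/

import Mathlib

open scoped BigOperators Classical

noncomputable section

/-- `p` is a probability mass function on the finite type `Ω`. -/
def IsPMF {Ω : Type*} [Fintype Ω] (p : Ω → ℝ) : Prop :=
  (∀ ω, 0 ≤ p ω) ∧ ∑ ω, p ω = 1

/-- Probability of the event `X = s` under `p`. -/
def prOf {Ω S : Type*} [Fintype Ω] [DecidableEq S] (p : Ω → ℝ) (X : Ω → S) (s : S) : ℝ :=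
  ∑ ω ∈ Finset.univ.filter (fun ω => X ω = s), p ω

/-- Shannon entropy (in bits) of the random variable `X` under the pmf `p`. -/
def ent {Ω S : Type*} [Fintype Ω] [Fintype S] [DecidableEq S] (p : Ω → ℝ) (X : Ω → S) : ℝ :=
  - ∑ s : S, prOf p X s * Real.logb 2 (prOf p X s)

/-- Mutual information `I(X:Y) = H(X) + H(Y) - H(X,Y)`. -/
def mi {Ω S T : Type*} [Fintype Ω] [Fintype S] [Fintype T] [DecidableEq S] [DecidableEq T]
    (p : Ω → ℝ) (X : Ω → S) (Y : Ω → T) : ℝ :=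
  ent p X + ent p Y - ent p (fun ω => (X ω, Y ω))

/-- Conditional mutual information `I(X:Y|Z) = H(X,Z) + H(Y,Z) - H(X,Y,Z) - H(Z)`. -/
def cmi {Ω S T U : Type*} [Fintype Ω] [Fintype S] [Fintype T] [Fintype U]
    [DecidableEq S] [DecidableEq T] [DecidableEq U]
    (p : Ω → ℝ) (X : Ω → S) (Y : Ω → T) (Z : Ω → U) : ℝ :=
  ent p (fun ω => (X ω, Z ω)) + ent p (fun ω => (Y ω, Z ω))
    - ent p (fun ω => (X ω, Y ω, Z ω)) - ent p Z

/-- Conditional entropy `H(X|Y) = H(X,Y) - H(Y)`. -/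
def condEnt {Ω S T : Type*} [Fintype Ω] [Fintype S] [Fintype T] [DecidableEq S] [DecidableEq T]
    (p : Ω → ℝ) (X : Ω → S) (Y : Ω → T) : ℝ :=
  ent p (fun ω => (X ω, Y ω)) - ent p Y

/-- The four coordinate random variables on `Bool × Bool × Bool × Bool`. -/
def vA : Bool × Bool × Bool × Bool → Bool := fun ω => ω.1
def vB : Bool × Bool × Bool × Bool → Bool := fun ω => ω.2.1
def vC : Bool × Bool × Bool × Bool → Bool := fun ω => ω.2.2.1
def vD : Bool × Bool × Bool × Bool → Bool := fun ω => ω.2.2.2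

/-!
In the witness `matusWitness ε` the variables `C, D` are conditionally independent given `A` and
given `B`. At `ε = 0` one has `I(C:D) = I(A:B)` and `I(A:B|C) = I(B:D|C) = 0`. Moving mass `3ε`
onto the new atom `(0,0,0,0)` changes `I(C:D)`, `I(A:B|C)` and `I(B:D|C)` only by `O(ε)`, since
all the other masses involved stay in `[1/4, 1]` where `x ↦ -x log x` is `1`-Lipschitz; but it
lowers `I(A:B)` by a further `-3ε log (3ε)` (in nats), because `(0,0)` is a new value of `(A, B)`
but not of `(C, D)`. For `log (3ε) < -(4κ + 5)` this superlinear drop beats the `κ`-weighted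
linear terms.
-/

open Real Set

lemma abs_negMulLog_sub_le {x y : ℝ} (hx : x ∈ Icc (exp (-2)) 1) (hy : y ∈ Icc (exp (-2)) 1) :
    |negMulLog y - negMulLog x| ≤ |y - x| := by
  have hderiv : ∀ t ∈ Icc (exp (-2)) 1,
      HasDerivWithinAt negMulLog (-log t - 1) (Icc (exp (-2)) 1) t :=
    fun t ht => (hasDerivAt_negMulLog ((exp_pos _).trans_le ht.1).ne').hasDerivWithinAt
  have hbound : ∀ t ∈ Icc (exp (-2)) 1, ‖-log t - 1‖ ≤ 1 := by
    rintro t ⟨ht0, ht1⟩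
    have hlo : -2 ≤ log t := by simpa using log_le_log (exp_pos _) ht0
    have hhi : log t ≤ 0 := log_nonpos ((exp_pos _).le.trans ht0) ht1
    rw [Real.norm_eq_abs, abs_le]
    constructor <;> linarith
  simpa using (convex_Icc _ _).norm_image_sub_le_of_norm_hasDerivWithin_le hderiv hbound hx hy

lemma exp_neg_two_le_quarter : exp (-2) ≤ 1 / 4 := by
  have h : (2 : ℝ) ≤ exp 1 := by linarith [add_one_le_exp (1 : ℝ)]
  rw [show (-2 : ℝ) = -(1 + 1) by norm_num, exp_neg, exp_add, one_div]
  gcongr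
  nlinarith

lemma ent_eq_sum_negMulLog {Ω S : Type*} [Fintype Ω] [Fintype S] [DecidableEq S]
    (p : Ω → ℝ) (X : Ω → S) : ent p X = (∑ s, negMulLog (prOf p X s)) / log 2 := by
  simp only [ent, negMulLog, logb, Finset.sum_div, ← Finset.sum_neg_distrib]
  congr 1; ext s; ring

def matusWitness (ε : ℝ) : Bool × Bool × Bool × Bool → ℝ
  | (false, false, false, false) => 3 * ε
  | (true, true, false, false) | (true, false, true, false) | (false, true, false, true) =>
    1/3 - ε
  | _ => 0

lemma isPMF_matusWitness {ε : ℝ} (h0 : 0 ≤ ε) (h1 : ε ≤ 1/3) : IsPMF (matusWitness ε) := by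
  refine ⟨?_, ?_⟩
  · rintro ⟨_ | _, _ | _, _ | _, _ | _⟩ <;> simp only [matusWitness] <;>
      linarith
  · simp [matusWitness, Fintype.sum_prod_type]
    ring

lemma cmi_matusWitness_C_D_A (ε : ℝ) : cmi (matusWitness ε) vC vD vA = 0 := by
  simp only [cmi, ent_eq_sum_negMulLog, prOf, Finset.sum_filter]
  simp [Fintype.sum_prod_type, vA, vC, vD, matusWitness]
  ring_nf

lemma cmi_matusWitness_C_D_B (ε : ℝ) : cmi (matusWitness ε) vC vD vB = 0 := by
  simp only [cmi, ent_eq_sum_negMulLog, prOf, Finset.sum_filter]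
  simp [Fintype.sum_prod_type, vB, vC, vD, matusWitness]
  ring_nf

lemma mi_matusWitness_C_D (ε : ℝ) : mi (matusWitness ε) vC vD =
    (2 * negMulLog (2/3 + ε) - negMulLog (1/3 + 2*ε)) / log 2 := by
  simp only [mi, ent_eq_sum_negMulLog, prOf, Finset.sum_filter]
  simp [Fintype.sum_prod_type, vC, vD, matusWitness]
  ring_nf

lemma mi_matusWitness_A_B (ε : ℝ) : mi (matusWitness ε) vA vB =
    (2 * negMulLog (2/3 - 2*ε) + 2 * negMulLog (1/3 + 2*ε) - 3 * negMulLog (1/3 - ε)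
      - negMulLog (3 * ε)) / log 2 := by
  simp only [mi, ent_eq_sum_negMulLog, prOf, Finset.sum_filter]
  simp [Fintype.sum_prod_type, vA, vB, matusWitness]
  ring_nf

lemma cmi_matusWitness_A_B_C (ε : ℝ) : cmi (matusWitness ε) vA vB vC =
    (negMulLog (1/3 + 2*ε) + negMulLog (2/3 - 2*ε) - negMulLog (1/3 - ε) - negMulLog (2/3 + ε))
      / log 2 := by
  simp only [cmi, ent_eq_sum_negMulLog, prOf, Finset.sum_filter]
  simp [Fintype.sum_prod_type, vA, vB, vC, matusWitness]
  ring_nf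

lemma cmi_matusWitness_B_D_C (ε : ℝ) : cmi (matusWitness ε) vB vD vC =
    (negMulLog (1/3 + 2*ε) + negMulLog (2/3 - 2*ε) - negMulLog (1/3 - ε) - negMulLog (2/3 + ε))
      / log 2 := by
  simp only [cmi, ent_eq_sum_negMulLog, prOf, Finset.sum_filter]
  simp [Fintype.sum_prod_type, vB, vC, vD, matusWitness]
  ring_nf

/-- `log 2` times the gap `I(C:D) - (I(C:D|A) + I(C:D|B) + I(A:B) + κ (I(A:B|C) + I(B:D|C)))`
at `matusWitness ε`. -/
lemma matusWitness_gap_pos {κ ε : ℝ} (hκ : 0 < κ) (hε : 0 < ε)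
    (hlog : log (3 * ε) < -(4 * κ + 5)) :
    0 < negMulLog (3 * ε) + (2 * κ + 3) * (negMulLog (1/3 - ε) - negMulLog (1/3 + 2*ε))
      + (2 * κ + 2) * (negMulLog (2/3 + ε) - negMulLog (2/3 - 2*ε)) := by
  have hε_small : 3 * ε ≤ 1 / 4 := by
    have : log (3 * ε) < -2 := by linarith
    rw [log_lt_iff_lt_exp (by positivity)] at this
    linarith [exp_neg_two_le_quarter]
  have mem : ∀ x : ℝ, 1 / 4 ≤ x → x ≤ 1 → x ∈ Icc (exp (-2)) 1 :=
    fun x h0 h1 => ⟨exp_neg_two_le_quarter.trans h0, h1⟩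
  have h₁ : -(3 * ε) ≤ negMulLog (1/3 - ε) - negMulLog (1/3 + 2*ε) := by
    have := (abs_le.mp (abs_negMulLog_sub_le (mem (1/3 + 2*ε) (by linarith) (by linarith))
      (mem (1/3 - ε) (by linarith) (by linarith)))).1
    rwa [show 1/3 - ε - (1/3 + 2*ε) = -(3 * ε) by ring, abs_neg,
      abs_of_pos (by positivity : (0:ℝ) < 3 * ε)] at this
  have h₂ : -(3 * ε) ≤ negMulLog (2/3 + ε) - negMulLog (2/3 - 2*ε) := by
    have := (abs_le.mp (abs_negMulLog_sub_le (mem (2/3 - 2*ε) (by linarith) (by linarith))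
      (mem (2/3 + ε) (by linarith) (by linarith)))).1
    rwa [show 2/3 + ε - (2/3 - 2*ε) = 3 * ε by ring,
      abs_of_pos (by positivity : (0:ℝ) < 3 * ε)] at this
  have h₃ : (4 * κ + 5) * (3 * ε) < negMulLog (3 * ε) := by
    rw [negMulLog]
    nlinarith [mul_lt_mul_of_pos_left hlog (by positivity : (0:ℝ) < 3 * ε)]
  nlinarith [mul_le_mul_of_nonneg_left h₁ (by positivity : (0:ℝ) ≤ 2 * κ + 3),
    mul_le_mul_of_nonneg_left h₂ (by positivity : (0:ℝ) ≤ 2 * κ + 2)]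

theorem matus_essentially_conditional (κ : ℝ) (hκ : 0 < κ) :
    ∃ p : Bool × Bool × Bool × Bool → ℝ, IsPMF p ∧
      cmi p vC vD vA + cmi p vC vD vB + mi p vA vB
          + κ * (cmi p vA vB vC + cmi p vB vD vC)
        < mi p vC vD := by
  set ε := exp (-(4 * κ + 6)) / 3 with hε_def
  have hε : 0 < ε := by positivity
  have hε_le : ε ≤ 1 / 3 := by
    rw [hε_def]
    linarith [exp_le_one_iff.mpr (by linarith : -(4 * κ + 6) ≤ 0)]
  have hlog : log (3 * ε) < -(4 * κ + 5) := by
    rw [mul_div_cancel₀ _ three_ne_zero, log_exp]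
    linarith
  refine ⟨matusWitness ε, isPMF_matusWitness hε.le hε_le, ?_⟩
  rw [cmi_matusWitness_C_D_A, cmi_matusWitness_C_D_B, mi_matusWitness_A_B, cmi_matusWitness_A_B_C,
    cmi_matusWitness_B_D_C, mi_matusWitness_C_D]
  refine sub_pos.mp ((div_pos (matusWitness_gap_pos hκ hε hlog) (log_pos one_lt_two)).trans_eq ?_)
  ring

end
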